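/- arXiv:2212.02913 — 6 statements merged into one kernel-verified Lean document; each statement's English description precedes it below -/
import Mathlib

section
/- Let X be a real random variable with X ≤ 1 almost surely and E[X] ≥ 0, and let κ ∈ (0, 1/2]. Then either (i) Pr[X < -2κ] ≤ 3/4, or (ii) there exists a nonnegative integer i ≤ ⌈log₂(1/κ)⌉ - 1 such that Pr[X ≥ 2^i κ] ≥ 1/(2^{i+2} ⌈log₂(1/κ)⌉). -/
/-! With `n = ⌈log₂(1/κ)⌉` we have `X ≤ 1 ≤ 2ⁿκ`, and the dyadic layer-cake bound
`X ≤ κ - 3κ·1{X < -2κ} + ∑_{i<n} 2ⁱκ·1{X ≥ 2ⁱκ}` holds pointwise. If both alternatives failed,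
taking expectations would give `0 ≤ E[X] < κ - 9κ/4 + κ/4 < 0`. -/

open MeasureTheory Finset

theorem min_le_add_sum_dyadic (κ x : ℝ) (n : ℕ) :
    min x (2 ^ n * κ) ≤ κ + ∑ i ∈ range n, if 2 ^ i * κ ≤ x then 2 ^ i * κ else 0 := by
  induction n with
  | zero => simp
  | succ n ih =>
    rw [sum_range_succ]
    split_ifs with h
    · have hpow : 2 ^ (n + 1) * κ = 2 ^ n * κ + 2 ^ n * κ := by ring
      linarith [min_le_right x (2 ^ (n + 1) * κ), min_eq_right h]
    · rw [min_eq_left (not_le.mp h).le] at ih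
      linarith [min_le_left x (2 ^ (n + 1) * κ)]

theorem le_sub_add_sum_dyadic {κ x : ℝ} {n : ℕ} (hκ : 0 ≤ κ) (hx : x ≤ 2 ^ n * κ) :
    x ≤ κ - (if x < -2 * κ then 3 * κ else 0) +
      ∑ i ∈ range n, if 2 ^ i * κ ≤ x then 2 ^ i * κ else 0 := by
  have hsum : 0 ≤ ∑ i ∈ range n, if 2 ^ i * κ ≤ x then 2 ^ i * κ else 0 :=
    sum_nonneg fun i _ => by split_ifs <;> positivity
  have hmin := min_le_add_sum_dyadic κ x n
  rw [min_eq_left hx] at hmin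
  split_ifs with h <;> linarith

theorem integral_le_sub_add_sum_dyadic {Ω : Type*} [MeasurableSpace Ω] {μ : Measure Ω}
    [IsProbabilityMeasure μ] {X : Ω → ℝ} (hX : Integrable X μ) {κ : ℝ} (hκ : 0 ≤ κ) {n : ℕ}
    (hle : ∀ᵐ ω ∂μ, X ω ≤ 2 ^ n * κ) :
    ∫ ω, X ω ∂μ ≤ κ - 3 * κ * μ.real {ω | X ω < -2 * κ} +
      ∑ i ∈ range n, 2 ^ i * κ * μ.real {ω | X ω ≥ 2 ^ i * κ} := by
  have hA : NullMeasurableSet {ω | X ω < -2 * κ} μ :=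
    nullMeasurableSet_lt hX.aemeasurable aemeasurable_const
  have hB (i : ℕ) : NullMeasurableSet {ω | X ω ≥ 2 ^ i * κ} μ :=
    nullMeasurableSet_le aemeasurable_const hX.aemeasurable
  have hint (c : ℝ) {s : Set Ω} (hs : NullMeasurableSet s μ) :
      Integrable (s.indicator fun _ => c) μ := (integrable_const c).indicator₀ hs
  have hcalc (c : ℝ) {s : Set Ω} (hs : NullMeasurableSet s μ) :
      ∫ ω, s.indicator (fun _ => c) ω ∂μ = c * μ.real s := by
    rw [integral_indicator₀ hs, setIntegral_const, smul_eq_mul, mul_comm]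
  have hint_head : Integrable (fun ω => κ - {ω | X ω < -2 * κ}.indicator (fun _ => 3 * κ) ω) μ :=
    (integrable_const κ).sub (hint _ hA)
  have hint_sum : Integrable (fun ω =>
      ∑ i ∈ range n, {ω | X ω ≥ 2 ^ i * κ}.indicator (fun _ => 2 ^ i * κ) ω) μ :=
    integrable_finsetSum _ fun i _ => hint _ (hB i)
  calc ∫ ω, X ω ∂μ
      ≤ ∫ ω, (κ - {ω | X ω < -2 * κ}.indicator (fun _ => 3 * κ) ω +
          ∑ i ∈ range n, {ω | X ω ≥ 2 ^ i * κ}.indicator (fun _ => 2 ^ i * κ) ω) ∂μ := by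
        refine integral_mono_ae hX (hint_head.add hint_sum) ?_
        filter_upwards [hle] with ω hω
        simpa only [Set.indicator_apply, Set.mem_ofPred_eq, ge_iff_le] using
          le_sub_add_sum_dyadic hκ hω
    _ = _ := by
        rw [integral_add hint_head hint_sum, integral_sub (integrable_const κ) (hint _ hA),
          integral_finsetSum _ fun i _ => hint _ (hB i), integral_const, hcalc _ hA]
        simp only [hcalc _ (hB _), probReal_univ, one_smul, mul_assoc]

theorem sum_two_pow_mul_mul_le_div_four {κ : ℝ} (hκ : 0 ≤ κ) {n : ℕ} {q : ℕ → ℝ}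
    (hq : ∀ i < n, q i ≤ 1 / (2 ^ (i + 2) * n)) :
    ∑ i ∈ range n, 2 ^ i * κ * q i ≤ κ / 4 := by
  rcases n.eq_zero_or_pos with rfl | hn
  · simpa using by positivity
  have hterm (i : ℕ) (hi : i ∈ range n) : 2 ^ i * κ * q i ≤ κ / (4 * n) := by
    calc 2 ^ i * κ * q i ≤ 2 ^ i * κ * (1 / (2 ^ (i + 2) * n)) :=
          mul_le_mul_of_nonneg_left (hq i (mem_range.mp hi)) (by positivity)
      _ = κ / (4 * n) := by field_simp; ring
  calc ∑ i ∈ range n, 2 ^ i * κ * q i ≤ ∑ _i ∈ range n, κ / (4 * n) := sum_le_sum hterm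
    _ = κ / 4 := by rw [sum_const, card_range, nsmul_eq_mul]; field_simp

theorem le_two_pow_toNat_ceil_logb {x : ℝ} (hx : 0 < x) : x ≤ 2 ^ ⌈Real.logb 2 x⌉.toNat := by
  rw [← Real.rpow_natCast, ← Real.logb_le_iff_le_rpow one_lt_two hx]
  exact (Int.le_ceil _).trans (by exact_mod_cast Int.self_le_toNat _)

theorem stmt_1_general {Ω : Type*} [MeasurableSpace Ω] (μ : Measure Ω) [IsProbabilityMeasure μ]
    (X : Ω → ℝ) (hle : ∀ᵐ ω ∂μ, X ω ≤ 1)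
    (hint : Integrable X μ) (hE : 0 ≤ ∫ ω, X ω ∂μ)
    (κ : ℝ) (hκ0 : 0 < κ) :
    (μ {ω | X ω < -2*κ}).toReal ≤ 3/4 ∨
    ∃ i : ℕ, (i : ℤ) ≤ ⌈Real.logb 2 (1/κ)⌉ - 1 ∧
      (μ {ω | X ω ≥ 2^i * κ}).toReal ≥
        1 / (2^(i+2) * ((⌈Real.logb 2 (1/κ)⌉ : ℤ) : ℝ)) := by
  by_contra! h
  obtain ⟨hlow, hlevels⟩ := h
  set L := ⌈Real.logb 2 (1 / κ)⌉
  have hcover : ∀ᵐ ω ∂μ, X ω ≤ 2 ^ L.toNat * κ := by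
    have h := le_two_pow_toNat_ceil_logb (one_div_pos.mpr hκ0)
    rw [div_le_iff₀ hκ0] at h
    exact hle.mono fun ω hω => hω.trans h
  have htail : ∑ i ∈ range L.toNat, 2 ^ i * κ * μ.real {ω | X ω ≥ 2 ^ i * κ} ≤ κ / 4 := by
    refine sum_two_pow_mul_mul_le_div_four hκ0.le fun i hi => ?_
    have hL : ((L.toNat : ℕ) : ℝ) = L := by exact_mod_cast Int.toNat_of_nonneg (by omega)
    rw [hL]
    exact (hlevels i (by omega)).le
  have hbound := integral_le_sub_add_sum_dyadic hint hκ0.le hcover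
  change 3 / 4 < μ.real {ω | X ω < -2 * κ} at hlow
  nlinarith

/-- Dichotomy for a random variable `X ≤ 1` a.s. with `E[X] ≥ 0` and `κ ∈ (0,1/2]`:
either `Pr[X < -2κ] ≤ 3/4`, or some dyadic level `i ≤ ⌈log₂(1/κ)⌉ - 1` satisfies
`Pr[X ≥ 2^i κ] ≥ 1/(2^(i+2) ⌈log₂(1/κ)⌉)`. -/
theorem stmt_1 {Ω : Type*} [MeasurableSpace Ω] (μ : Measure Ω) [IsProbabilityMeasure μ]
    (X : Ω → ℝ) (hX : Measurable X) (hle : ∀ᵐ ω ∂μ, X ω ≤ 1)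
    (hint : Integrable X μ) (hE : 0 ≤ ∫ ω, X ω ∂μ)
    (κ : ℝ) (hκ0 : 0 < κ) (hκ1 : κ ≤ 1/2) :
    (μ {ω | X ω < -2*κ}).toReal ≤ 3/4 ∨
    ∃ i : ℕ, (i : ℤ) ≤ ⌈Real.logb 2 (1/κ)⌉ - 1 ∧
      (μ {ω | X ω ≥ 2^i * κ}).toReal ≥
        1 / (2^(i+2) * ((⌈Real.logb 2 (1/κ)⌉ : ℤ) : ℝ)) :=
  stmt_1_general μ X hle hint hE κ hκ0
end

section
/- Let S be a finite nonempty multiset of vectors in the closed unit ball of ℝ^n and let κ ∈ (0, 1/2]. If u, v are independent uniform samples from S, then there exists a nonnegative integer i ≤ ⌈log₂(1/κ)⌉ - 1 such that Pr[⟨u,v⟩ ≥ 2^i κ - 2κ] ≥ 2^{-i-2} / ⌈log₂(1/κ)⌉. -/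
open scoped RealInnerProductSpace
open Finset

set_option maxHeartbeats 1000000

/-- Refined inner product lemma: for a finite family of vectors in the closed unit
ball of ℝ^n and `κ ∈ (0,1/2]`, there is `i ≤ ⌈log₂(1/κ)⌉ - 1` such that the fraction
of ordered pairs with inner product at least `2^i κ - 2κ` is at least
`2^{-i-2}/⌈log₂(1/κ)⌉`. -/
theorem stmt_2 (n N : ℕ) (hN : 0 < N) (v : Fin N → EuclideanSpace ℝ (Fin n))
    (hball : ∀ a, ‖v a‖ ≤ 1) (κ : ℝ) (hκ0 : 0 < κ) (hκ1 : κ ≤ 1/2) :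
    ∃ i : ℕ, (i : ℤ) ≤ ⌈Real.logb 2 (1/κ)⌉ - 1 ∧
      (Nat.card {p : Fin N × Fin N // ⟪v p.1, v p.2⟫ ≥ 2^i * κ - 2*κ} : ℝ) / (N^2 : ℝ)
        ≥ (1 / 2^(i+2)) / ((⌈Real.logb 2 (1/κ)⌉ : ℤ) : ℝ) := by
  classical
  by_contra hcon
  push_neg at hcon
  set L : ℤ := ⌈Real.logb 2 (1/κ)⌉ with hLdef
  have hκ2 : (2:ℝ) ≤ 1/κ := by rw [le_div_iff₀ hκ0]; linarith
  have hlogb1 : (1:ℝ) ≤ Real.logb 2 (1/κ) := by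
    calc (1:ℝ) = Real.logb 2 2 := by simp
    _ ≤ Real.logb 2 (1/κ) := Real.logb_le_logb_of_le (by norm_num) two_pos hκ2
  have hL1 : 1 ≤ L := by
    have := Int.le_ceil (Real.logb 2 (1/κ))
    exact_mod_cast hlogb1.trans this
  have hLpos : (0:ℝ) < (L:ℝ) := by exact_mod_cast hL1.trans_lt' (by norm_num)
  have hL0 : (L:ℝ) ≠ 0 := ne_of_gt hLpos
  have hLR1 : (1:ℝ) ≤ (L:ℝ) := by exact_mod_cast hL1
  set M : ℕ := L.toNat with hMdef
  have hM1 : 1 ≤ M := by omega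
  have hMC : (M : ℤ) = L := Int.toNat_of_nonneg (by omega)
  have hMR : (M : ℝ) = (L : ℝ) := by exact_mod_cast hMC
  -- 2^M ≥ 1/κ
  have hpow : 1/κ ≤ (2:ℝ)^M := by
    have h1 : (2:ℝ) ^ Real.logb 2 (1/κ) = 1/κ :=
      Real.rpow_logb two_pos (by norm_num) (by positivity)
    have h2 : Real.logb 2 (1/κ) ≤ (M:ℝ) := by
      rw [hMR]; exact (Int.le_ceil _)
    calc 1/κ = (2:ℝ) ^ Real.logb 2 (1/κ) := h1.symm
    _ ≤ (2:ℝ) ^ ((M:ℕ):ℝ) := Real.rpow_le_rpow_of_exponent_le one_le_two h2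
    _ = (2:ℝ)^M := by rw [Real.rpow_natCast]
  have hκpow : (1:ℝ) ≤ κ * 2^M := by
    rw [div_le_iff₀ hκ0] at hpow; linarith
  -- notation
  set X : Fin N × Fin N → ℝ := fun p => ⟪v p.1, v p.2⟫ with hXdef
  set t : ℕ → ℝ := fun i => 2^i * κ - 2*κ with htdef
  have htmono : ∀ ⦃i j : ℕ⦄, i ≤ j → t i ≤ t j := by
    intro i j hij
    have : (2:ℝ)^i ≤ 2^j := pow_le_pow_right₀ one_le_two hij
    simp only [htdef]; nlinarith
  set c : ℕ → ℕ := fun i => (univ.filter (fun p : Fin N × Fin N => t i ≤ X p)).card with hcdef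
  -- counting bound from hcon
  have hc : ∀ i : ℕ, i < M → (c i : ℝ) < (N:ℝ)^2 * ((1 / 2^(i+2)) / (L:ℝ)) := by
    intro i hi
    have hi' : (i : ℤ) ≤ L - 1 := by omega
    have h := hcon i hi'
    have hcard : Nat.card {p : Fin N × Fin N // ⟪v p.1, v p.2⟫ ≥ 2^i * κ - 2*κ} = c i := by
      rw [Nat.card_eq_fintype_card, Fintype.card_subtype]
    rw [hcard] at h
    rw [div_lt_iff₀ (by positivity)] at h
    calc (c i : ℝ) < (1 / 2^(i+2)) / (L:ℝ) * (N:ℝ)^2 := by exact_mod_cast h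
    _ = (N:ℝ)^2 * ((1 / 2^(i+2)) / (L:ℝ)) := by ring
  -- nonnegativity of total sum
  have hS : (0:ℝ) ≤ ∑ p : Fin N × Fin N, X p := by
    have h1 : ⟪∑ a, v a, ∑ a, v a⟫ = ∑ a, ∑ b, ⟪v a, v b⟫ := by
      simp only [sum_inner, inner_sum]
      exact Finset.sum_comm
    calc (0:ℝ) ≤ ⟪∑ a, v a, ∑ a, v a⟫ := real_inner_self_nonneg
    _ = ∑ a, ∑ b, ⟪v a, v b⟫ := h1
    _ = ∑ p : Fin N × Fin N, X p := by rw [Fintype.sum_prod_type]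
  -- pointwise bound
  have hXle : ∀ p, X p ≤ 1 := by
    intro p
    calc X p ≤ ‖v p.1‖ * ‖v p.2‖ := real_inner_le_norm _ _
    _ ≤ 1 * 1 := mul_le_mul (hball _) (hball _) (norm_nonneg _) zero_le_one
    _ = 1 := by ring
  have hpt : ∀ p, X p ≤ -κ + (if t 0 ≤ X p then κ else 0)
      + (∑ i ∈ Ico 1 M, if t i ≤ X p then 2^i * κ else 0)
      + (if t (M-1) ≤ X p then 2*κ else 0) := by
    intro p
    set x := X p with hx
    by_cases h0 : t 0 ≤ x
    · by_cases hT : t (M-1) ≤ x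
      · have hall : ∀ i ∈ Ico 1 M, (if t i ≤ x then (2:ℝ)^i * κ else 0) = 2^i * κ := by
          intro i hi
          rw [if_pos]
          exact le_trans (htmono (by simp at hi; omega)) hT
        rw [Finset.sum_congr rfl hall, if_pos h0, if_pos hT]
        have hgeo : ∑ i ∈ Ico 1 M, (2:ℝ)^i = (2^M - 2^1)/(2-1) := geom_sum_Ico (by norm_num) hM1
        rw [← Finset.sum_mul, hgeo]
        have : x ≤ 1 := hXle p
        nlinarith
      · have hj0 : t (Nat.findGreatest (fun i => t i ≤ x) (M-1)) ≤ x :=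
          Nat.findGreatest_spec (P := fun i => t i ≤ x) (Nat.zero_le _) h0
        set j := Nat.findGreatest (fun i => t i ≤ x) (M-1) with hjdef
        have hjle : j ≤ M - 1 := Nat.findGreatest_le _
        have hjlt : j < M - 1 := by
          rcases lt_or_eq_of_le hjle with h | h
          · exact h
          · exact absurd (h ▸ hj0) hT
        have hjmax : ¬ t (j+1) ≤ x :=
          Nat.findGreatest_is_greatest (P := fun i => t i ≤ x) (n := M-1) (k := j+1)
            (by rw [hjdef]; omega) (by omega)
        have hsub : Ico 1 (j+1) ⊆ Ico 1 M := Finset.Ico_subset_Ico le_rfl (by omega)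
        have hlower : ∑ i ∈ Ico 1 (j+1), (2:ℝ)^i * κ ≤
            ∑ i ∈ Ico 1 M, (if t i ≤ x then (2:ℝ)^i * κ else 0) := by
          calc ∑ i ∈ Ico 1 (j+1), (2:ℝ)^i * κ
              = ∑ i ∈ Ico 1 (j+1), (if t i ≤ x then (2:ℝ)^i * κ else 0) := by
                refine (Finset.sum_congr rfl fun i hi => ?_).symm
                rw [if_pos]
                exact le_trans (htmono (by simp at hi; omega)) hj0
          _ ≤ _ := by
                refine Finset.sum_le_sum_of_subset_of_nonneg hsub fun i _ _ => ?_
                split <;> positivity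
        have hgeo : ∑ i ∈ Ico 1 (j+1), (2:ℝ)^i = (2^(j+1) - 2^1)/(2-1) :=
          geom_sum_Ico (by norm_num) (by omega)
        rw [← Finset.sum_mul, hgeo] at hlower
        have hxlt : x < t (j+1) := lt_of_not_ge hjmax
        have h1 : (0:ℝ) ≤ if t (M-1) ≤ x then 2*κ else 0 := by split <;> positivity
        rw [if_pos h0]
        simp only [htdef] at hxlt
        nlinarith
    · have hall : ∀ i ∈ Ico 1 M, (if t i ≤ x then (2:ℝ)^i * κ else 0) = 0 := by
        intro i hi
        rw [if_neg]
        intro h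
        exact h0 (le_trans (htmono (Nat.zero_le _)) h)
      rw [Finset.sum_congr rfl hall, if_neg h0,
        if_neg (fun h => h0 (le_trans (htmono (Nat.zero_le _)) h))]
      have hlt : x < t 0 := lt_of_not_ge h0
      simp only [htdef] at hlt
      simp only [Finset.sum_const_zero, add_zero]
      nlinarith
  -- sum the pointwise bound
  have key : ∀ (i : ℕ) (a : ℝ),
      ∑ p : Fin N × Fin N, (if t i ≤ X p then a else 0) = a * c i := by
    intro i a
    rw [Finset.sum_ite, Finset.sum_const, Finset.sum_const_zero, add_zero, nsmul_eq_mul,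
      mul_comm]
  have hsum : ∑ p : Fin N × Fin N, X p ≤
      (N:ℝ)^2 * (-κ) + κ * c 0 + (∑ i ∈ Ico 1 M, 2^i * κ * c i) + 2*κ * c (M-1) := by
    have e3 : ∑ p : Fin N × Fin N, ∑ i ∈ Ico 1 M, (if t i ≤ X p then (2:ℝ)^i * κ else 0)
        = ∑ i ∈ Ico 1 M, 2^i * κ * c i := by
      rw [Finset.sum_comm]
      exact Finset.sum_congr rfl fun i _ => key i (2^i * κ)
    calc ∑ p : Fin N × Fin N, X p
        ≤ ∑ p : Fin N × Fin N, (-κ + (if t 0 ≤ X p then κ else 0)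
          + (∑ i ∈ Ico 1 M, if t i ≤ X p then 2^i * κ else 0)
          + (if t (M-1) ≤ X p then 2*κ else 0)) := Finset.sum_le_sum fun p _ => hpt p
    _ = (N:ℝ)^2 * (-κ) + κ * c 0 + (∑ i ∈ Ico 1 M, 2^i * κ * c i) + 2*κ * c (M-1) := by
        rw [Finset.sum_add_distrib, Finset.sum_add_distrib, Finset.sum_add_distrib,
          key 0 κ, key (M-1) (2*κ), e3, Finset.sum_const]
        simp only [Finset.card_univ, Fintype.card_prod, Fintype.card_fin, nsmul_eq_mul]
        push_cast
        try ring
        try simp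
  -- final arithmetic
  have hNpos : (0:ℝ) < (N:ℝ)^2 := by positivity
  have hc0 : κ * c 0 < κ * (N:ℝ)^2 / (4*(L:ℝ)) := by
    have h := hc 0 (by omega)
    have he : κ * ((N:ℝ)^2 * ((1 / 2^(0+2)) / (L:ℝ))) = κ * (N:ℝ)^2 / (4*(L:ℝ)) := by
      field_simp
      try ring
      try tauto
    calc κ * c 0 < κ * ((N:ℝ)^2 * ((1 / 2^(0+2)) / (L:ℝ))) := (mul_lt_mul_iff_right₀ hκ0).mpr h
    _ = κ * (N:ℝ)^2 / (4*(L:ℝ)) := he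
  have hmid : ∑ i ∈ Ico 1 M, (2:ℝ)^i * κ * c i ≤ ((M:ℝ) - 1) * (κ * (N:ℝ)^2 / (4*(L:ℝ))) := by
    have hterm : ∀ i ∈ Ico 1 M, (2:ℝ)^i * κ * c i ≤ κ * (N:ℝ)^2 / (4*(L:ℝ)) := by
      intro i hi
      simp only [mem_Ico] at hi
      have hci := (hc i hi.2).le
      have hid : (2:ℝ)^i * κ * ((N:ℝ)^2 * ((1/2^(i+2))/(L:ℝ))) = κ * (N:ℝ)^2 / (4*(L:ℝ)) := by
        rw [pow_add]
        field_simp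
        ring
      calc (2:ℝ)^i * κ * c i ≤ (2:ℝ)^i * κ * ((N:ℝ)^2 * ((1/2^(i+2))/(L:ℝ))) :=
            mul_le_mul_of_nonneg_left hci (by positivity)
      _ = κ * (N:ℝ)^2 / (4*(L:ℝ)) := hid
    calc ∑ i ∈ Ico 1 M, (2:ℝ)^i * κ * c i ≤ ∑ _i ∈ Ico 1 M, κ * (N:ℝ)^2 / (4*(L:ℝ)) :=
          Finset.sum_le_sum hterm
    _ = ((M:ℝ) - 1) * (κ * (N:ℝ)^2 / (4*(L:ℝ))) := by
        rw [Finset.sum_const, Nat.card_Ico, nsmul_eq_mul]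
        congr 1
        push_cast [Nat.cast_sub hM1]
        ring
  have htop : 2*κ * c (M-1) < κ * κ * (N:ℝ)^2 / (L:ℝ) := by
    have hcm := hc (M-1) (by omega)
    have he : (M-1)+2 = M+1 := by omega
    rw [he] at hcm
    have h2M : (1:ℝ)/2^M ≤ κ := by
      rw [div_le_iff₀ (by positivity)]
      linarith
    have step1 : 2*κ*((c (M-1)):ℝ) < 2*κ*((N:ℝ)^2*((1/2^(M+1))/(L:ℝ))) :=
      (mul_lt_mul_iff_right₀ (by positivity)).mpr hcm
    have step2 : 2*κ*((N:ℝ)^2*((1/2^(M+1))/(L:ℝ))) = κ*(N:ℝ)^2*((1:ℝ)/2^M)/(L:ℝ) := by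
      rw [pow_succ]
      field_simp
      ring
    have step3 : κ*(N:ℝ)^2*((1:ℝ)/2^M)/(L:ℝ) ≤ κ*(N:ℝ)^2*κ/(L:ℝ) := by
      gcongr
    calc 2*κ*((c (M-1)):ℝ) < κ*(N:ℝ)^2*((1:ℝ)/2^M)/(L:ℝ) := step2 ▸ step1
    _ ≤ κ*(N:ℝ)^2*κ/(L:ℝ) := step3
    _ = κ * κ * (N:ℝ)^2 / (L:ℝ) := by ring
  have hfinal : κ * (N:ℝ)^2 ≤ κ * c 0 + (∑ i ∈ Ico 1 M, (2:ℝ)^i * κ * c i) + 2*κ * c (M-1) := by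
    have h0R := hS.trans hsum
    linarith [h0R]
  have e : κ*(N:ℝ)^2/(4*(L:ℝ)) + ((L:ℝ)-1)*(κ*(N:ℝ)^2/(4*(L:ℝ))) = κ*(N:ℝ)^2/4 := by
    field_simp
    ring
  have f : κ*κ*(N:ℝ)^2/(L:ℝ) ≤ κ*κ*(N:ℝ)^2 := div_le_self (by positivity) hLR1
  have g : κ*κ*(N:ℝ)^2 ≤ (1/2)*(κ*(N:ℝ)^2) := by
    nlinarith [mul_le_mul_of_nonneg_right hκ1 (by positivity : (0:ℝ) ≤ κ * (N:ℝ)^2)]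
  have hκN : (0:ℝ) < κ * (N:ℝ)^2 := by positivity
  rw [hMR] at hmid
  linarith
end

section
/- Let S be a finite multiset of vectors in the closed unit ball of ℝ^n with |S| ≥ 1 and κ ∈ (0, 1/2], and set K = ⌈log₂(1/κ)⌉. Suppose T ⊆ S satisfies |T| ≥ (77/96)|S|. Then it cannot hold that for every integer ℓ with 0 ≤ ℓ ≤ K, the number of ordered pairs (c,c') ∈ T × T with ⟨c,c'⟩ ≥ 2^ℓ κ - 2κ is less than |T|²/(2^{ℓ+2} K). -/
open scoped RealInnerProductSpace

private lemma aux_layer (κ : ℝ) (hκ : 0 ≤ κ) : ∀ (M : ℕ) (x : ℝ),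
    x ≤ 2^(M+1)*κ - 2*κ →
    x ≤ -κ + ∑ ℓ ∈ Finset.range (M+1),
      (2^ℓ * κ) * (if 2^ℓ*κ - 2*κ ≤ x then 1 else 0) := by
  intro M
  induction M with
  | zero =>
    intro x hx
    have h0 : (2:ℝ)^(0:ℕ) = 1 := by norm_num
    have h1 : (2:ℝ)^(0+1:ℕ) = 2 := by norm_num
    by_cases h : (2:ℝ)^(0:ℕ)*κ - 2*κ ≤ x
    · rw [Finset.sum_range_one, if_pos h, mul_one]
      nlinarith
    · rw [Finset.sum_range_one, if_neg h, mul_zero]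
      push_neg at h
      nlinarith
  | succ M ih =>
    intro x hx
    by_cases h : 2^(M+1)*κ - 2*κ ≤ x
    · have hsum : ∑ ℓ ∈ Finset.range (M+2),
          ((2:ℝ)^ℓ * κ) * (if 2^ℓ*κ - 2*κ ≤ x then 1 else 0)
          = ∑ ℓ ∈ Finset.range (M+2), (2:ℝ)^ℓ * κ := by
        apply Finset.sum_congr rfl
        intro ℓ hℓ
        rw [Finset.mem_range] at hℓ
        have hle : (2:ℝ)^ℓ ≤ 2^(M+1) :=
          pow_le_pow_right₀ (by norm_num : (1:ℝ) ≤ 2) (by omega)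
        rw [if_pos (by nlinarith), mul_one]
      rw [hsum, ← Finset.sum_mul, geom_sum_eq (by norm_num : (2:ℝ) ≠ 1)]
      have h2 : (2:ℝ)^(M+1+1) = 2*2^(M+1) := by ring
      nlinarith [hx]
    · rw [Finset.sum_range_succ, if_neg h, mul_zero, add_zero]
      push_neg at h
      exact ih x h.le

/-- Contradiction step of the great collision lemma: if `T` is a sub-family of size at
least `(77/96)|S|` of a family `S` of vectors in the unit ball, then it cannot be that
for every `ℓ ≤ K = ⌈log₂(1/κ)⌉` the number of ordered pairs in `T × T` with inner
product at least `2^ℓ κ - 2κ` is below `|T|²/(2^{ℓ+2} K)`. -/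
theorem stmt_3 (n N : ℕ) (hN : 1 ≤ N) (v : Fin N → EuclideanSpace ℝ (Fin n))
    (hball : ∀ a, ‖v a‖ ≤ 1) (κ : ℝ) (hκ0 : 0 < κ) (hκ1 : κ ≤ 1/2)
    (K : ℝ) (hK : K = ((⌈Real.logb 2 (1/κ)⌉ : ℤ) : ℝ))
    (T : Finset (Fin N)) (hT : (T.card : ℝ) ≥ (77/96) * N) :
    ¬ (∀ ℓ : ℕ, (ℓ : ℝ) ≤ K →
        (Nat.card {p : Fin N × Fin N //
            p.1 ∈ T ∧ p.2 ∈ T ∧ ⟪v p.1, v p.2⟫ ≥ 2^ℓ * κ - 2*κ} : ℝ)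
          < (T.card : ℝ)^2 / (2^(ℓ+2) * K)) := by
  intro h
  have hN1 : (1:ℝ) ≤ N := by exact_mod_cast hN
  have hmpos : 0 < T.card := by
    by_contra hc
    push_neg at hc
    have h0 : T.card = 0 := by omega
    rw [h0] at hT
    push_cast at hT
    nlinarith
  have hmR : (1:ℝ) ≤ T.card := by exact_mod_cast hmpos
  -- log facts
  have hlogb : (1:ℝ) ≤ Real.logb 2 (1/κ) := by
    rw [Real.le_logb_iff_rpow_le (by norm_num) (by positivity)]
    rw [Real.rpow_one, le_div_iff₀ hκ0]
    linarith
  have hceil : Real.logb 2 (1/κ) ≤ ((⌈Real.logb 2 (1/κ)⌉ : ℤ) : ℝ) := Int.le_ceil _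
  have hK1 : (1:ℝ) ≤ K := by rw [hK]; linarith
  have hKpos : (0:ℝ) < K := by linarith
  have hceil0 : (0:ℤ) ≤ ⌈Real.logb 2 (1/κ)⌉ := by
    have : (0:ℝ) ≤ ((⌈Real.logb 2 (1/κ)⌉ : ℤ) : ℝ) := by linarith
    exact_mod_cast this
  set Kn := (⌈Real.logb 2 (1/κ)⌉).toNat with hKndef
  have hKKn : K = (Kn : ℝ) := by
    rw [hK]
    have : ((Kn : ℕ) : ℤ) = ⌈Real.logb 2 (1/κ)⌉ := Int.toNat_of_nonneg hceil0
    exact_mod_cast this.symm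
  -- 2^Kn * κ ≥ 1
  have hpow : (1:ℝ) ≤ 2^Kn * κ := by
    have heq := Real.rpow_logb (by norm_num : (0:ℝ) < 2) (by norm_num : (2:ℝ) ≠ 1)
      (by positivity : (0:ℝ) < 1/κ)
    have hle : (2:ℝ) ^ Real.logb 2 (1/κ) ≤ (2:ℝ) ^ ((Kn:ℝ)) := by
      apply Real.rpow_le_rpow_left_iff (by norm_num : (1:ℝ) < 2) |>.mpr
      rw [← hKKn, hK]; exact hceil
    rw [heq, Real.rpow_natCast] at hle
    rw [div_le_iff₀ hκ0] at hle
    linarith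
  -- count bridge
  have hcnt : ∀ ℓ : ℕ, (ℓ:ℝ) ≤ K →
      ((((T ×ˢ T).filter (fun p => 2^ℓ*κ - 2*κ ≤ ⟪v p.1, v p.2⟫)).card : ℝ))
        < (T.card : ℝ)^2 / (2^(ℓ+2) * K) := by
    intro ℓ hℓ
    have hh := h ℓ hℓ
    have hcard : Nat.card {p : Fin N × Fin N //
        p.1 ∈ T ∧ p.2 ∈ T ∧ ⟪v p.1, v p.2⟫ ≥ 2^ℓ*κ - 2*κ}
        = ((T ×ˢ T).filter (fun p => 2^ℓ*κ - 2*κ ≤ ⟪v p.1, v p.2⟫)).card := by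
      rw [Nat.card_eq_fintype_card, Fintype.card_subtype]
      congr 1
      ext p
      simp [Finset.mem_filter, Finset.mem_product, ge_iff_le, and_assoc]
    rw [hcard] at hh
    exact hh
  -- nonnegativity of the full sum
  have hS0 : (0:ℝ) ≤ ∑ p ∈ T ×ˢ T, ⟪v p.1, v p.2⟫ := by
    have hid : ⟪∑ a ∈ T, v a, ∑ b ∈ T, v b⟫
        = ∑ a ∈ T, ∑ b ∈ T, ⟪v a, v b⟫ := by
      rw [sum_inner]
      exact Finset.sum_congr rfl fun a _ => inner_sum _ _ _
    rw [Finset.sum_product, ← hid]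
    exact real_inner_self_nonneg
  -- pointwise layer bound
  have hubd : ∀ p ∈ T ×ˢ T, ⟪v p.1, v p.2⟫ ≤ -κ + ∑ ℓ ∈ Finset.range (Kn+1),
      (2^ℓ * κ) * (if 2^ℓ*κ - 2*κ ≤ ⟪v p.1, v p.2⟫ then 1 else 0) := by
    intro p _
    apply aux_layer κ hκ0.le Kn
    have h1 : ⟪v p.1, v p.2⟫ ≤ 1 := by
      calc ⟪v p.1, v p.2⟫ ≤ ‖v p.1‖ * ‖v p.2‖ := real_inner_le_norm _ _
        _ ≤ 1 := mul_le_one₀ (hball _) (norm_nonneg _) (hball _)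
    have h2 : (2:ℝ)^(Kn+1) = 2 * 2^Kn := by ring
    nlinarith
  have hsum_le : ∑ p ∈ T ×ˢ T, ⟪v p.1, v p.2⟫
      ≤ ∑ p ∈ T ×ˢ T, (-κ + ∑ ℓ ∈ Finset.range (Kn+1),
          (2^ℓ*κ) * (if 2^ℓ*κ - 2*κ ≤ ⟪v p.1, v p.2⟫ then 1 else 0)) :=
    Finset.sum_le_sum hubd
  -- compute RHS
  have hRHS : ∑ p ∈ T ×ˢ T, (-κ + ∑ ℓ ∈ Finset.range (Kn+1),
          (2^ℓ*κ) * (if 2^ℓ*κ - 2*κ ≤ ⟪v p.1, v p.2⟫ then 1 else 0))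
      = -κ * (T.card:ℝ)^2 + ∑ ℓ ∈ Finset.range (Kn+1),
          (2^ℓ*κ) * ((((T ×ˢ T).filter (fun p => 2^ℓ*κ - 2*κ ≤ ⟪v p.1, v p.2⟫)).card : ℝ)) := by
    rw [Finset.sum_add_distrib, Finset.sum_const, Finset.card_product, Finset.sum_comm]
    congr 1
    · rw [nsmul_eq_mul]
      push_cast
      ring
    · apply Finset.sum_congr rfl
      intro ℓ _
      rw [← Finset.mul_sum, Finset.sum_boole]
  -- per-level bound
  have hterm : ∀ ℓ ∈ Finset.range (Kn+1),
      (2^ℓ*κ) * ((((T ×ˢ T).filter (fun p => 2^ℓ*κ - 2*κ ≤ ⟪v p.1, v p.2⟫)).card : ℝ))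
        < κ * (T.card:ℝ)^2 / (4*K) := by
    intro ℓ hℓ
    have hℓK : (ℓ:ℝ) ≤ K := by
      rw [hKKn]
      exact_mod_cast Nat.lt_succ_iff.mp (Finset.mem_range.mp hℓ)
    have hc := hcnt ℓ hℓK
    have h2 : (0:ℝ) < 2^ℓ*κ := by positivity
    calc (2^ℓ*κ) * ((((T ×ˢ T).filter (fun p => 2^ℓ*κ - 2*κ ≤ ⟪v p.1, v p.2⟫)).card : ℝ))
        < (2^ℓ*κ) * ((T.card:ℝ)^2/(2^(ℓ+2)*K)) := by
          exact mul_lt_mul_of_pos_left hc h2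
      _ = κ * (T.card:ℝ)^2 / (4*K) := by
          rw [pow_add]
          field_simp
          ring
  have hsum2 : ∑ ℓ ∈ Finset.range (Kn+1),
      (2^ℓ*κ) * ((((T ×ˢ T).filter (fun p => 2^ℓ*κ - 2*κ ≤ ⟪v p.1, v p.2⟫)).card : ℝ))
      < ((Kn:ℝ)+1) * (κ * (T.card:ℝ)^2 / (4*K)) := by
    have := Finset.sum_lt_sum_of_nonempty (Finset.nonempty_range_add_one) hterm
    rwa [Finset.sum_const, Finset.card_range, nsmul_eq_mul, Nat.cast_add, Nat.cast_one] at this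
  -- put it together
  have hfin : ((Kn:ℝ)+1) * (κ * (T.card:ℝ)^2 / (4*K)) ≤ κ * (T.card:ℝ)^2 / 2 := by
    rw [← hKKn, mul_div_assoc']
    rw [div_le_div_iff₀ (by positivity) (by norm_num)]
    nlinarith [mul_nonneg hκ0.le (sq_nonneg ((T.card:ℝ)))]
  have hκm : κ ≤ κ * (T.card:ℝ)^2 := by nlinarith
  rw [hRHS] at hsum_le
  linarith
end

section
/- Great collision lemma: Let S be a finite multiset of vectors in the closed unit ball of ℝ^n and κ ∈ (0, 1/2]; write K = ⌈log₂(1/κ)⌉. Then there exists a nonnegative integer ℓ ≤ K such that for every sub-multiset S' ⊆ S with |S'| ≤ |S|/(32K), if c is uniform on S and c' is uniform on S \ S', then Pr_c[ Pr_{c'}[⟨c,c'⟩ ≥ 2^ℓ κ - 2κ] ≥ 1/(2^{ℓ+5} K) ] ≥ 3/(31K). -/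
/-!
Suppose no level `ℓ ≤ K` works. Then every level has an adversarial set `S_ℓ`, and only few
vectors `c` collide often with `S \ S_ℓ` at threshold `2^ℓ κ - 2κ`. Removing all the `S_ℓ` and
all these vectors leaves a set `W` of most of the vectors in which every vector has at most
`N / (2^(ℓ+5) K)` partners above the threshold of level `ℓ`, at every level. Writing
`⟪c, c'⟫ ≤ -κ + ∑ 2^(ℓ+1) κ [⟪c, c'⟫ ≥ 2^ℓ κ - 2κ]` (a dyadic layer-cake bound), every row of the
Gram matrix of `W` sums to at most `κ (N/8 - |W|)`, while the whole Gram matrix sums to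
`‖∑_{c ∈ W} c‖² ≥ 0`. Hence `|W| ≤ N/8`, contradicting the size of `W`.
-/

open scoped RealInnerProductSpace
open Finset

theorem le_neg_add_sum_dyadic {κ x : ℝ} (hκ : 0 ≤ κ) :
    ∀ K : ℕ, x + κ ≤ 2 ^ (K + 1) * κ →
      x ≤ -κ + ∑ ℓ ∈ range (K + 1), if 2 ^ ℓ * κ - 2 * κ ≤ x then 2 ^ (ℓ + 1) * κ else 0
  | 0, hx => by
    simp only [zero_add, pow_one, range_one, sum_singleton, pow_zero, one_mul] at hx ⊢
    split_ifs <;> linarith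
  | K + 1, hx => by
    have hterms : 0 ≤ ∑ ℓ ∈ range (K + 1),
        if 2 ^ ℓ * κ - 2 * κ ≤ x then 2 ^ (ℓ + 1) * κ else (0 : ℝ) :=
      sum_nonneg fun ℓ _ => by split_ifs <;> positivity
    rw [sum_range_succ]
    by_cases hK : x + κ ≤ 2 ^ (K + 1) * κ
    · have := le_neg_add_sum_dyadic hκ K hK
      split_ifs <;> linarith [show (0 : ℝ) ≤ 2 ^ (K + 1 + 1) * κ by positivity]
    · rw [if_pos (by linarith)]
      linarith

variable {E ι : Type*} [NormedAddCommGroup E] [InnerProductSpace ℝ E]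

theorem sum_sum_inner_self_nonneg (W : Finset ι) (v : ι → E) :
    0 ≤ ∑ i ∈ W, ∑ j ∈ W, ⟪v i, v j⟫ := by
  have h := real_inner_self_nonneg (x := ∑ i ∈ W, v i)
  rw [sum_inner] at h
  simpa only [inner_sum] using h

section FewCollisions

variable {W : Finset ι} {v : ι → E} {κ M : ℝ} {K : ℕ} {i : ι}

theorem sum_inner_le_of_few_collisions (hv : ∀ i ∈ W, ‖v i‖ ≤ 1) (hκ : 0 < κ)
    (hK : 1 ≤ 2 ^ K * κ)
    (hM : ∀ ℓ ≤ K, 2 ^ (ℓ + 1) * (#{j ∈ W | 2 ^ ℓ * κ - 2 * κ ≤ ⟪v i, v j⟫} : ℝ) ≤ M)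
    (hi : i ∈ W) :
    ∑ j ∈ W, ⟪v i, v j⟫ ≤ κ * ((K + 1) * M - #W) := by
  have hpoint : ∀ j ∈ W, ⟪v i, v j⟫ ≤ -κ + ∑ ℓ ∈ range (K + 1),
      if 2 ^ ℓ * κ - 2 * κ ≤ ⟪v i, v j⟫ then 2 ^ (ℓ + 1) * κ else 0 := by
    intro j hj
    have hle : ⟪v i, v j⟫ ≤ 1 := (real_inner_le_norm _ _).trans
      (mul_le_one₀ (hv i hi) (norm_nonneg _) (hv j hj))
    have hκK : κ ≤ 2 ^ K * κ := le_mul_of_one_le_left hκ.le (one_le_pow₀ one_le_two)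
    refine le_neg_add_sum_dyadic hκ.le K ?_
    rw [pow_succ]
    linarith
  calc ∑ j ∈ W, ⟪v i, v j⟫
      ≤ ∑ j ∈ W, (-κ + ∑ ℓ ∈ range (K + 1),
          if 2 ^ ℓ * κ - 2 * κ ≤ ⟪v i, v j⟫ then 2 ^ (ℓ + 1) * κ else 0) := sum_le_sum hpoint
    _ = -κ * #W + ∑ ℓ ∈ range (K + 1), κ * (2 ^ (ℓ + 1) *
          (#{j ∈ W | 2 ^ ℓ * κ - 2 * κ ≤ ⟪v i, v j⟫} : ℝ)) := by
      rw [sum_add_distrib, sum_comm]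
      simp only [sum_const, nsmul_eq_mul, sum_ite]
      congr 1
      · ring
      · exact sum_congr rfl fun ℓ _ => by ring
    _ ≤ -κ * #W + ∑ ℓ ∈ range (K + 1), κ * M := by
      gcongr with ℓ hℓ
      exact hM ℓ (Nat.lt_succ_iff.mp (mem_range.mp hℓ))
    _ = κ * ((K + 1) * M - #W) := by
      simp only [sum_const, card_range, nsmul_eq_mul]; push_cast; ring

theorem card_le_of_few_collisions (hv : ∀ i ∈ W, ‖v i‖ ≤ 1) (hκ : 0 < κ)
    (hK : 1 ≤ 2 ^ K * κ) (hM0 : 0 ≤ M)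
    (hM : ∀ i ∈ W, ∀ ℓ ≤ K,
      2 ^ (ℓ + 1) * (#{j ∈ W | 2 ^ ℓ * κ - 2 * κ ≤ ⟪v i, v j⟫} : ℝ) ≤ M) :
    (#W : ℝ) ≤ (K + 1) * M := by
  have hgram : 0 ≤ (#W : ℝ) * (κ * ((K + 1) * M - #W)) := by
    calc 0 ≤ ∑ i ∈ W, ∑ j ∈ W, ⟪v i, v j⟫ := sum_sum_inner_self_nonneg W v
      _ ≤ ∑ _i ∈ W, κ * ((K + 1) * M - #W) :=
        sum_le_sum fun i hi => sum_inner_le_of_few_collisions hv hκ hK (hM i hi) hi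
      _ = _ := by rw [sum_const, nsmul_eq_mul]
  rcases (Nat.cast_nonneg (α := ℝ) #W).eq_or_lt with hW | hW
  · rw [← hW]; positivity
  · nlinarith [mul_pos hκ hW]

end FewCollisions

theorem exists_nat_eq_ceil_logb_inv {κ : ℝ} (hκ0 : 0 < κ) (hκ1 : κ ≤ 1 / 2) :
    ∃ K : ℕ, (K : ℝ) = ((⌈Real.logb 2 (1 / κ)⌉ : ℤ) : ℝ) ∧ 1 ≤ K ∧ 1 ≤ 2 ^ K * κ := by
  have hlog : 1 ≤ Real.logb 2 (1 / κ) := by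
    rw [Real.le_logb_iff_rpow_le one_lt_two (by positivity), Real.rpow_one, le_div_iff₀ hκ0]
    linarith
  have hceil : (1 : ℤ) ≤ ⌈Real.logb 2 (1 / κ)⌉ := Int.one_le_ceil_iff.mpr (by linarith)
  refine ⟨⌈Real.logb 2 (1 / κ)⌉.toNat, by exact_mod_cast Int.toNat_of_nonneg (by omega),
    by omega, ?_⟩
  have hK : Real.logb 2 (1 / κ) ≤ (⌈Real.logb 2 (1 / κ)⌉.toNat : ℕ) := by
    exact_mod_cast (Int.le_ceil _).trans (by exact_mod_cast (Int.self_le_toNat _))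
  rw [Real.logb_le_iff_le_rpow one_lt_two (by positivity), Real.rpow_natCast,
    div_le_iff₀ hκ0] at hK
  exact hK

theorem sub_card_mul_le_card_compl_biUnion {α : Type*} [Fintype α] [DecidableEq α]
    (s : Finset ι) (t : ι → Finset α) {b : ℝ} (ht : ∀ i ∈ s, (#(t i) : ℝ) ≤ b) :
    Fintype.card α - #s * b ≤ #(s.biUnion t)ᶜ := by
  have hunion : (#(s.biUnion t) : ℝ) ≤ #s * b :=
    calc (#(s.biUnion t) : ℝ) ≤ ∑ i ∈ s, (#(t i) : ℝ) := by exact_mod_cast card_biUnion_le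
      _ ≤ #s * b := by simpa only [nsmul_eq_mul] using sum_le_card_nsmul s _ b ht
  rw [card_compl, Nat.cast_sub (card_le_univ _)]
  linarith

section Collisions

variable {N : ℕ} (v : Fin N → E)

noncomputable def collisionRatio (S' : Finset (Fin N)) (t : ℝ) (c : Fin N) : ℝ :=
  (Nat.card {c' : Fin N // c' ∉ S' ∧ ⟪v c, v c'⟫ ≥ t} : ℝ) / ((N : ℝ) - #S')

variable {v}

theorem card_collisions_le_of_collisionRatio_lt {S' W : Finset (Fin N)} (hW : Disjoint W S')
    (hS' : #S' < N) {t q : ℝ} {c : Fin N} (h : collisionRatio v S' t c < q) :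
    (#{j ∈ W | t ≤ ⟪v c, v j⟫} : ℝ) ≤ q * N := by
  classical
  have hpos : (0 : ℝ) < N - #S' := by rw [sub_pos]; exact_mod_cast hS'
  have hsub : {j ∈ W | t ≤ ⟪v c, v j⟫} ⊆ ({j | j ∉ S' ∧ t ≤ ⟪v c, v j⟫} : Finset (Fin N)) :=
    fun j hj => by
      simp only [mem_filter, mem_univ, true_and] at hj ⊢
      exact ⟨disjoint_left.mp hW hj.1, hj.2⟩
  have hq : 0 < q := (div_nonneg (Nat.cast_nonneg _) hpos.le).trans_lt h
  rw [collisionRatio, div_lt_iff₀ hpos, Nat.card_eq_fintype_card, Fintype.card_subtype] at h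
  calc (#{j ∈ W | t ≤ ⟪v c, v j⟫} : ℝ)
      ≤ #({j | j ∉ S' ∧ t ≤ ⟪v c, v j⟫} : Finset (Fin N)) := by exact_mod_cast card_le_card hsub
    _ ≤ q * (N - #S') := h.le
    _ ≤ q * N := by gcongr; simp

theorem two_pow_mul_card_collisions_le {S' W : Finset (Fin N)} (hW : Disjoint W S')
    (hS' : #S' < N) {κ : ℝ} {ℓ K : ℕ} (hK : 0 < K) {c : Fin N}
    (hc : ¬ collisionRatio v S' (2 ^ ℓ * κ - 2 * κ) c ≥ 1 / (2 ^ (ℓ + 5) * K)) :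
    2 ^ (ℓ + 1) * (#{j ∈ W | 2 ^ ℓ * κ - 2 * κ ≤ ⟪v c, v j⟫} : ℝ) ≤ N / (16 * K) :=
  calc _ ≤ (2 : ℝ) ^ (ℓ + 1) * (1 / (2 ^ (ℓ + 5) * K) * N) :=
        mul_le_mul_of_nonneg_left
          (card_collisions_le_of_collisionRatio_lt hW hS' (not_le.mp hc)) (by positivity)
    _ = N / (16 * K) := by field_simp; ring

theorem exists_large_of_forall_level_bad (hN : 0 < N) {κ : ℝ} {K : ℕ} (hK : 1 ≤ K)
    (hbad : ∀ ℓ : Fin (K + 1), ∃ S' : Finset (Fin N), (#S' : ℝ) ≤ N / (32 * K) ∧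
      (Nat.card {c // collisionRatio v S' (2 ^ (ℓ : ℕ) * κ - 2 * κ) c ≥
        1 / (2 ^ ((ℓ : ℕ) + 5) * K)} : ℝ) / N < 3 / (31 * K)) :
    ∃ W : Finset (Fin N), N - (K + 1) * (N / (32 * K) + 3 / (31 * K) * N) ≤ (#W : ℝ) ∧
      ∀ c ∈ W, ∀ ℓ ≤ K,
        2 ^ (ℓ + 1) * (#{j ∈ W | 2 ^ ℓ * κ - 2 * κ ≤ ⟪v c, v j⟫} : ℝ) ≤ N / (16 * K) := by
  classical
  have hNpos : (0 : ℝ) < N := by exact_mod_cast hN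
  have hK1 : (1 : ℝ) ≤ K := by exact_mod_cast hK
  choose S hS hG using hbad
  set G : Fin (K + 1) → Finset (Fin N) := fun ℓ =>
    {c | collisionRatio v (S ℓ) (2 ^ (ℓ : ℕ) * κ - 2 * κ) c ≥ 1 / (2 ^ ((ℓ : ℕ) + 5) * K)}
  have hSG : ∀ ℓ, (#(S ℓ ∪ G ℓ) : ℝ) ≤ N / (32 * K) + 3 / (31 * K) * N := fun ℓ => by
    have hGℓ : (#(G ℓ) : ℝ) < 3 / (31 * K) * N := by
      have := hG ℓ
      rwa [Nat.card_eq_fintype_card, Fintype.card_subtype, div_lt_iff₀ hNpos] at this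
    have : (#(S ℓ ∪ G ℓ) : ℝ) ≤ #(S ℓ) + #(G ℓ) := by exact_mod_cast card_union_le _ _
    linarith [hS ℓ]
  refine ⟨(univ.biUnion fun ℓ => S ℓ ∪ G ℓ)ᶜ, by
    simpa using sub_card_mul_le_card_compl_biUnion univ _ fun ℓ _ => hSG ℓ, ?_⟩
  intro c hc ℓ hℓ
  set L : Fin (K + 1) := ⟨ℓ, Nat.lt_succ_of_le hℓ⟩
  have hWS : Disjoint (univ.biUnion fun ℓ => S ℓ ∪ G ℓ)ᶜ (S L) := disjoint_left.mpr
    fun x hx hxS => mem_compl.mp hx (mem_biUnion.mpr ⟨L, mem_univ _, mem_union_left _ hxS⟩)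
  have hSN : #(S L) < N := by
    exact_mod_cast (hS L).trans_lt (div_lt_self hNpos (by linarith))
  refine two_pow_mul_card_collisions_le hWS hSN hK fun h => mem_compl.mp hc ?_
  exact mem_biUnion.mpr ⟨L, mem_univ _, mem_union_right _ (by simpa [G] using h)⟩

end Collisions

theorem add_one_mul_collision_budget_lt {K N : ℝ} (hK : 1 ≤ K) (hN : 0 < N) :
    (K + 1) * (N / (32 * K) + 3 / (31 * K) * N) + (K + 1) * (N / (16 * K)) < N := by
  have hK2 : (K + 1) / K ≤ 2 := by rw [div_le_iff₀ (by positivity)]; linarith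
  calc _ = (K + 1) / K * N * (1 / 32 + 3 / 31 + 1 / 16) := by field_simp
    _ ≤ 2 * N * (1 / 32 + 3 / 31 + 1 / 16) := by gcongr
    _ < N := by linarith

/-- Great collision lemma: for a finite family `S` of vectors in the unit ball of ℝ^n
and `κ ∈ (0,1/2]`, with `K = ⌈log₂(1/κ)⌉`, there is `ℓ ≤ K` such that for every
sub-family `S'` of size at most `|S|/(32K)`, a uniform `c ∈ S` has, with probability
at least `3/(31K)`, the property that a uniform `c' ∈ S \ S'` satisfies
`⟨c,c'⟩ ≥ 2^ℓ κ - 2κ` with probability at least `1/(2^{ℓ+5} K)`. -/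
theorem stmt_4 (n N : ℕ) (hN : 0 < N) (v : Fin N → EuclideanSpace ℝ (Fin n))
    (hball : ∀ a, ‖v a‖ ≤ 1) (κ : ℝ) (hκ0 : 0 < κ) (hκ1 : κ ≤ 1/2)
    (K : ℝ) (hK : K = ((⌈Real.logb 2 (1/κ)⌉ : ℤ) : ℝ)) :
    ∃ ℓ : ℕ, (ℓ : ℝ) ≤ K ∧
      ∀ S' : Finset (Fin N), (S'.card : ℝ) ≤ (N : ℝ) / (32 * K) →
        (Nat.card {c : Fin N //
            (Nat.card {c' : Fin N // c' ∉ S' ∧ ⟪v c, v c'⟫ ≥ 2^ℓ * κ - 2*κ} : ℝ)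
              / ((N : ℝ) - S'.card) ≥ 1 / (2^(ℓ+5) * K)} : ℝ) / (N : ℝ)
          ≥ 3 / (31 * K) := by
  obtain ⟨K₀, hK₀, hK₀1, hK₀κ⟩ := exists_nat_eq_ceil_logb_inv hκ0 hκ1
  obtain rfl : K = K₀ := hK.trans hK₀.symm
  by_contra! hbad
  obtain ⟨W, hW_large, hW_collisions⟩ := exists_large_of_forall_level_bad hN hK₀1
    fun ℓ => hbad ℓ (by exact_mod_cast ℓ.is_le)
  have hW_small := card_le_of_few_collisions (fun i _ => hball i) hκ0 hK₀κ (by positivity)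
    hW_collisions
  linarith [add_one_mul_collision_budget_lt (K := K₀) (by exact_mod_cast hK₀1)
    (by exact_mod_cast hN : (0 : ℝ) < N)]
end

section
/- Let ε ∈ (0,1/9) and let v ∈ ℝ^m be a vector with at most 1/(9ε) nonzero entries and ‖v‖₂² = 1 ± ε. Set I = ⌈log₂(10/(9ε))⌉. Then there exists an integer i with 0 ≤ i ≤ I such that ∑_{k : |v_k|² ∈ [2^i ε, 2^{i+1} ε)} |v_k|² ≥ 7/(9(I+1)). -/
/-!
The entries with `v_k² < ε` are at most `1/(9ε)` in number, so they carry mass at most `1/9`,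
and the remaining entries carry mass at least `(1 - ε) - 1/9 ≥ 7/9`. Every entry satisfies
`v_k² ≤ 1 + ε < 10/9 ≤ 2^I ε`, so these entries are partitioned by the `I + 1` dyadic bands
`[2^i ε, 2^(i+1) ε)`, `i ≤ I`, and by pigeonhole one band carries mass at least `7/(9(I+1))`.
-/

open Finset Real Function

section DyadicBand

variable {ι : Type*} [Fintype ι]

noncomputable def dyadicBand (f : ι → ℝ) (ε : ℝ) (i : ℕ) : Finset ι :=
  univ.filter fun k => 2 ^ i * ε ≤ f k ∧ f k < 2 ^ (i + 1) * ε

variable {f : ι → ℝ} {ε : ℝ}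

lemma mem_dyadicBand {i : ℕ} {k : ι} :
    k ∈ dyadicBand f ε i ↔ 2 ^ i * ε ≤ f k ∧ f k < 2 ^ (i + 1) * ε := by
  simp [dyadicBand]

lemma pairwise_disjoint_dyadicBand (hε : 0 ≤ ε) : Pairwise (Disjoint on dyadicBand f ε) := by
  suffices h : ∀ i j : ℕ, i < j → Disjoint (dyadicBand f ε i) (dyadicBand f ε j) from
    fun i j hij => hij.lt_or_gt.elim (h i j) fun hji => (h j i hji).symm
  intro i j hij
  refine disjoint_left.mpr fun k hki hkj => ?_
  rw [mem_dyadicBand] at hki hkj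
  have : (2 : ℝ) ^ (i + 1) * ε ≤ 2 ^ j * ε :=
    mul_le_mul_of_nonneg_right (pow_le_pow_right₀ one_le_two hij) hε
  linarith [hki.2, hkj.1]

lemma biUnion_dyadicBand [DecidableEq ι] {n : ℕ} (hε : 0 < ε) (hf : ∀ k, f k < 2 ^ n * ε) :
    (range n).biUnion (dyadicBand f ε) = univ.filter fun k => ε ≤ f k := by
  ext k
  simp only [mem_biUnion, mem_range, mem_dyadicBand, mem_filter, mem_univ, true_and]
  constructor
  · rintro ⟨i, -, hi, -⟩
    exact le_trans (le_mul_of_one_le_left hε.le (one_le_pow₀ (by norm_num))) hi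
  · intro hk
    obtain ⟨i, hi, hi'⟩ := exists_nat_pow_near ((one_le_div hε).mpr hk) one_lt_two
    rw [le_div_iff₀ hε] at hi
    rw [div_lt_iff₀ hε] at hi'
    refine ⟨i, ?_, hi, hi'⟩
    by_contra! hni
    have : (2 : ℝ) ^ n * ε ≤ 2 ^ i * ε :=
      mul_le_mul_of_nonneg_right (pow_le_pow_right₀ one_le_two hni) hε.le
    linarith [hf k]

lemma sum_filter_le_eq_sum_dyadicBand {n : ℕ} (hε : 0 < ε) (hf : ∀ k, f k < 2 ^ n * ε) :
    ∑ k ∈ univ.filter (fun k => ε ≤ f k), f k = ∑ i ∈ range n, ∑ k ∈ dyadicBand f ε i, f k := by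
  classical
  rw [← biUnion_dyadicBand hε hf,
    sum_biUnion ((pairwise_disjoint_dyadicBand hε.le).set_pairwise _)]

lemma exists_le_sum_dyadicBand {n : ℕ} {M : ℝ} (hε : 0 < ε) (hf : ∀ k, f k < 2 ^ (n + 1) * ε)
    (hM : M ≤ ∑ k ∈ univ.filter (fun k => ε ≤ f k), f k) :
    ∃ i ≤ n, M / (n + 1) ≤ ∑ k ∈ dyadicBand f ε i, f k := by
  rw [sum_filter_le_eq_sum_dyadicBand hε hf] at hM
  have hconst : ∑ _i ∈ range (n + 1), M / (n + 1) = M := by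
    rw [sum_const, card_range, nsmul_eq_mul]; push_cast; field_simp
  obtain ⟨i, hi, hle⟩ := exists_le_of_sum_le nonempty_range_add_one (hconst.trans_le hM)
  exact ⟨i, Nat.lt_succ_iff.mp (mem_range.mp hi), hle⟩

end DyadicBand

section SmallEntries

variable {ι : Type*} [Fintype ι] (v : ι → ℝ) {ε : ℝ}

lemma sum_sq_filter_lt_le_card_mul (hε : 0 ≤ ε) :
    ∑ k ∈ univ.filter (fun k => v k ^ 2 < ε), v k ^ 2 ≤ Nat.card {k // v k ≠ 0} * ε := by
  classical
  rw [← sum_filter_ne_zero, filter_filter, Nat.card_eq_fintype_card, Fintype.card_subtype,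
    ← nsmul_eq_mul]
  calc ∑ k ∈ univ.filter (fun k => v k ^ 2 < ε ∧ v k ^ 2 ≠ 0), v k ^ 2
      ≤ #(univ.filter fun k => v k ^ 2 < ε ∧ v k ^ 2 ≠ 0) • ε :=
        sum_le_card_nsmul _ _ _ fun k hk => (mem_filter.mp hk).2.1.le
    _ ≤ #(univ.filter fun k => v k ≠ 0) • ε := by
        gcongr
        intro k hk
        simp_all

lemma sum_sq_sub_card_mul_le_sum_sq_filter (hε : 0 ≤ ε) :
    ∑ k, v k ^ 2 - Nat.card {k // v k ≠ 0} * ε ≤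
      ∑ k ∈ univ.filter (fun k => ε ≤ v k ^ 2), v k ^ 2 := by
  rw [← sum_filter_add_sum_filter_not univ (fun k => ε ≤ v k ^ 2)]
  simp only [not_le]
  linarith [sum_sq_filter_lt_le_card_mul v hε]

end SmallEntries

lemma le_pow_toNat_ceil_logb {b x : ℝ} (hb : 1 < b) (hx : 0 < x) :
    x ≤ b ^ ⌈logb b x⌉.toNat := by
  rw [← rpow_natCast, ← logb_le_iff_le_rpow hb hx]
  calc logb b x ≤ ⌈logb b x⌉ := Int.le_ceil _
    _ ≤ (⌈logb b x⌉.toNat : ℤ) := by exact_mod_cast Int.self_le_toNat _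

/-- Dyadic level selection: if `v` has at most `1/(9ε)` nonzero entries and squared
norm `1 ± ε`, then for `I = ⌈log₂(10/(9ε))⌉` there is a level `i ≤ I` whose dyadic
band `[2^i ε, 2^{i+1} ε)` carries squared mass at least `7/(9(I+1))`. -/
theorem stmt_6 (m : ℕ) (v : Fin m → ℝ) (ε : ℝ) (hε0 : 0 < ε) (hε1 : ε < 1/9)
    (hsparse : (Nat.card {k : Fin m // v k ≠ 0} : ℝ) ≤ 1 / (9 * ε))
    (hnorm : |(∑ k : Fin m, (v k)^2) - 1| ≤ ε)
    (I : ℤ) (hI : I = ⌈Real.logb 2 (10 / (9 * ε))⌉) :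
    ∃ i : ℕ, (i : ℤ) ≤ I ∧
      ∑ k ∈ Finset.univ.filter
          (fun k : Fin m => 2^i * ε ≤ (v k)^2 ∧ (v k)^2 < 2^(i+1) * ε), (v k)^2
        ≥ 7 / (9 * ((I : ℝ) + 1)) := by
  obtain ⟨hnorm_ge, hnorm_le⟩ := abs_le.mp hnorm
  have hI_nonneg : 0 ≤ I := hI ▸ Int.ceil_nonneg (logb_nonneg one_lt_two
    ((one_le_div (by positivity)).mpr (by linarith)))
  set n := I.toNat
  have hn : (n : ℝ) = I := by exact_mod_cast Int.toNat_of_nonneg hI_nonneg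
  have hpow : 10 / 9 ≤ (2 : ℝ) ^ n * ε := by
    have h := le_pow_toNat_ceil_logb one_lt_two (show 0 < 10 / (9 * ε) by positivity)
    rw [← hI, div_le_iff₀ (by positivity)] at h
    linarith
  have hentry : ∀ k, v k ^ 2 < 2 ^ (n + 1) * ε := fun k => by
    have hk_le_sum := single_le_sum (fun k _ => sq_nonneg (v k)) (mem_univ k)
    have hpow_lt : (2 : ℝ) ^ n * ε < 2 ^ (n + 1) * ε :=
      mul_lt_mul_of_pos_right (pow_lt_pow_right₀ one_lt_two n.lt_succ_self) hε0
    linarith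
  have hmass : 7 / 9 ≤ ∑ k ∈ univ.filter (fun k => ε ≤ v k ^ 2), v k ^ 2 := by
    have hsmall : (Nat.card {k // v k ≠ 0} : ℝ) * ε ≤ 1 / 9 :=
      calc _ ≤ 1 / (9 * ε) * ε := by gcongr
        _ = 1 / 9 := by field_simp
    linarith [sum_sq_sub_card_mul_le_sum_sq_filter v hε0.le]
  obtain ⟨i, hi, hband⟩ := exists_le_sum_dyadicBand hε0 hentry hmass
  refine ⟨i, by omega, ?_⟩
  rw [← hn, ge_iff_le, ← div_div]
  exact hband
end

section
/- Let A ∈ ℝ^{m × D} and suppose |⟨A_{*,p}, A_{*,q}⟩| ≥ λ·ε/β for distinct columns p ≠ q, where λ > 2, ε ∈ (0,1), β ∈ (0,1], and D = d/β. Let W ∈ ℝ^{D × d} be the random matrix whose (j,i) entry equals σ_j√β for (i−1)/β < j ≤ i/β (with σ_1,…,σ_D independent Rademacher signs) and 0 otherwise. Then there exists a unit vector u ∈ ℝ^d such that Pr_W[ ‖AWu‖₂² ∉ [(1−ε)², (1+ε)²] ] ≥ 1/4. -/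
/-!
Let `u` be the normalized indicator of the (one or two) blocks containing the columns `p` and `q`.
Then `AWu = ∑ⱼ σⱼ wⱼ A_j` with `wⱼ = √β u_{block j}`, and `w_p w_q ≥ β/2`. Fix all signs except
`σ_p, σ_q`: by polarization, the alternating sum of `‖AWu‖²` over the four choices of `(σ_p, σ_q)`
is `8 w_p w_q ⟨A_p, A_q⟩`, of absolute value `≥ 4λε > 8ε`. Were all four values in
`[(1-ε)², (1+ε)²]`, an interval of length `4ε`, this sum would be at most `8ε` in absolute value.
So each class of four sign vectors agreeing off `{p, q}` contains a bad one.
-/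

open Finset Function Matrix

theorem card_pi_le_of_forall_update_update_mem {ι β : Type*} [Fintype ι] [DecidableEq ι]
    [Fintype β] [DecidableEq β] (p q : ι) (s : Finset (ι → β))
    (hs : ∀ σ, ∃ a b, update (update σ p a) q b ∈ s) :
    Fintype.card β ^ Fintype.card ι ≤ Fintype.card β ^ 2 * #s := by
  choose a b hab using hs
  set φ : (ι → β) → ι → β := fun σ => update (update σ p (a σ)) q (b σ)
  have hfiber : ∀ τ ∈ s, #{σ | φ σ = τ} ≤ Fintype.card β ^ 2 := by
    intro τ _
    have hsub : ({σ | φ σ = τ} : Finset _) ⊆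
        univ.image fun xy : β × β => update (update τ p xy.1) q xy.2 := by
      intro σ hσ
      obtain rfl := (mem_filter.mp hσ).2
      refine mem_image.mpr ⟨(σ p, σ q), mem_univ _, ?_⟩
      ext j
      rcases eq_or_ne j q with rfl | hjq
      · simp
      rcases eq_or_ne j p with rfl | hjp <;> simp [φ, *]
    calc #{σ | φ σ = τ} ≤ #(univ.image fun xy : β × β => update (update τ p xy.1) q xy.2) :=
          card_le_card hsub
      _ ≤ Fintype.card (β × β) := card_image_le
      _ = Fintype.card β ^ 2 := by rw [Fintype.card_prod, sq]
  simpa using card_le_mul_card_image_of_maps_to (fun σ _ => hab σ) _ hfiber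

theorem exists_notMem_Icc_of_lt_abs_alternating_sum {f : Bool → Bool → ℝ} {l h : ℝ}
    (hf : 2 * (h - l) < |f true true + f false false - f true false - f false true|) :
    ∃ a b, f a b ∉ Set.Icc l h := by
  by_contra! hmem
  obtain ⟨h₁, h₁'⟩ := hmem true true
  obtain ⟨h₂, h₂'⟩ := hmem false false
  obtain ⟨h₃, h₃'⟩ := hmem true false
  obtain ⟨h₄, h₄'⟩ := hmem false true
  rcases lt_abs.mp hf with hf | hf <;> linarith

section DotProduct

variable {ι R : Type*} [Fintype ι]

theorem dotProduct_self_add_add_polarization [CommRing R] (x y z : ι → R) :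
    (x + y + z) ⬝ᵥ (x + y + z) + (x - y - z) ⬝ᵥ (x - y - z)
      - (x + y - z) ⬝ᵥ (x + y - z) - (x - y + z) ⬝ᵥ (x - y + z) = 8 * (y ⬝ᵥ z) := by
  simp only [add_dotProduct, dotProduct_add, sub_dotProduct, dotProduct_sub, dotProduct_comm z y]
  ring

theorem mulVec_single_dotProduct_mulVec_single {κ : Type*} [Fintype κ] [DecidableEq ι]
    [CommSemiring R] (A : Matrix κ ι R) (p q : ι) (x y : R) :
    (A *ᵥ Pi.single p x) ⬝ᵥ (A *ᵥ Pi.single q y) = x * y * (A.col p ⬝ᵥ A.col q) := by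
  have hcol : ∀ j t, A *ᵥ Pi.single j t = fun k => A k j * t := fun j t =>
    funext fun k => dotProduct_single (A k) t j
  simp only [hcol, dotProduct, col_apply, mul_sum]
  exact sum_congr rfl fun _ _ => by ring

end DotProduct

def boolSign (t : Bool) : ℝ := if t then 1 else -1

@[simp] lemma boolSign_true : boolSign true = 1 := rfl

@[simp] lemma boolSign_false : boolSign false = -1 := rfl

def signVec {ι : Type*} (w : ι → ℝ) (σ : ι → Bool) : ι → ℝ := fun j => boolSign (σ j) * w j

theorem signVec_update_update {ι : Type*} [DecidableEq ι] (w : ι → ℝ) (σ : ι → Bool) {p q : ι}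
    (hpq : p ≠ q) (a b : Bool) :
    signVec w (update (update σ p a) q b) =
      update (update (signVec w σ) p 0) q 0 + Pi.single p (boolSign a * w p)
        + Pi.single q (boolSign b * w q) := by
  ext j
  by_cases hjq : j = q <;> by_cases hjp : j = p <;> simp_all [signVec]

section SignedSum

variable {κ ι : Type*} [Fintype κ] [Fintype ι] [DecidableEq ι]

def signedSqNorm (A : Matrix κ ι ℝ) (w : ι → ℝ) (σ : ι → Bool) : ℝ :=
  (A *ᵥ signVec w σ) ⬝ᵥ (A *ᵥ signVec w σ)

theorem signedSqNorm_update_update_alternating_sum (A : Matrix κ ι ℝ) (w : ι → ℝ)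
    (σ : ι → Bool) {p q : ι} (hpq : p ≠ q) :
    signedSqNorm A w (update (update σ p true) q true)
      + signedSqNorm A w (update (update σ p false) q false)
      - signedSqNorm A w (update (update σ p true) q false)
      - signedSqNorm A w (update (update σ p false) q true)
      = 8 * (w p * w q * (A.col p ⬝ᵥ A.col q)) := by
  have hneg : ∀ j, A *ᵥ Pi.single j (boolSign false * w j) = -(A *ᵥ Pi.single j (w j)) := by
    intro j
    rw [boolSign_false, neg_one_mul, Pi.single_neg, mulVec_neg]
  simp only [signedSqNorm, signVec_update_update w σ hpq, mulVec_add, hneg, boolSign_true,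
    one_mul, ← sub_eq_add_neg]
  rw [dotProduct_self_add_add_polarization, mulVec_single_dotProduct_mulVec_single]

theorem pow_card_le_four_mul_card_signedSqNorm_notMem_Icc (A : Matrix κ ι ℝ) (w : ι → ℝ)
    {p q : ι} (hpq : p ≠ q) {l h : ℝ}
    (hlarge : h - l < 4 * |w p * w q * (A.col p ⬝ᵥ A.col q)|) :
    2 ^ Fintype.card ι ≤ 4 * #{σ | signedSqNorm A w σ ∉ Set.Icc l h} := by
  have key : ∀ σ : ι → Bool, ∃ a b, signedSqNorm A w (update (update σ p a) q b) ∉ Set.Icc l h :=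
    fun σ => exists_notMem_Icc_of_lt_abs_alternating_sum (by
      rw [signedSqNorm_update_update_alternating_sum A w σ hpq, abs_mul,
        abs_of_pos (by norm_num : (0 : ℝ) < 8)]
      linarith)
  have := card_pi_le_of_forall_update_update_mem p q {σ | signedSqNorm A w σ ∉ Set.Icc l h}
    fun σ => by
      obtain ⟨a, b, hab⟩ := key σ
      exact ⟨a, b, mem_filter.mpr ⟨mem_univ _, hab⟩⟩
  simpa only [Fintype.card_bool, show 2 ^ 2 = 4 from rfl] using this

end SignedSum

section Blocks

variable {d b : ℕ}

theorem of_ite_div_eq_mulVec {R : Type*} [NonUnitalNonAssocSemiring R]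
    (f : Fin (d * b) → R) (u : Fin d → R) :
    Matrix.of (fun (j : Fin (d * b)) (i : Fin d) => if (j : ℕ) / b = i then f j else 0) *ᵥ u =
      fun j => f j * u j.divNat := by
  ext j
  simp only [mulVec, dotProduct, of_apply, ite_mul, zero_mul]
  simp [← Fin.coe_divNat, Fin.val_inj]

theorem sum_sq_mul_blockSign_mulVec {m : ℕ} (A : Matrix (Fin m) (Fin (d * b)) ℝ) (c : ℝ)
    (u : Fin d → ℝ) (σ : Fin (d * b) → Bool) :
    ∑ k, ((A * Matrix.of (fun (j : Fin (d * b)) (i : Fin d) =>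
        if (j : ℕ) / b = i then (if σ j then (1 : ℝ) else -1) * c else 0)) *ᵥ u) k ^ 2 =
      signedSqNorm A (fun j => c * u j.divNat) σ := by
  rw [← mulVec_mulVec, of_ite_div_eq_mulVec]
  have : signVec (fun j => c * u j.divNat) σ = fun j => (if σ j then (1 : ℝ) else -1) * c *
      u j.divNat :=
    funext fun j => (mul_assoc _ _ _).symm
  simp only [signedSqNorm, this, dotProduct, sq]

end Blocks

theorem sum_sq_ite_mem_inv_sqrt_card {ι : Type*} [Fintype ι] [DecidableEq ι] (s : Finset ι)
    (hs : s.Nonempty) : ∑ i, (if i ∈ s then (√(#s : ℝ))⁻¹ else 0) ^ 2 = 1 := by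
  have : (0 : ℝ) < #s := by exact_mod_cast hs.card_pos
  simp [this.ne']

theorem stmt_19_general (m d b : ℕ)
    (A : Matrix (Fin m) (Fin (d * b)) ℝ)
    (lam ε : ℝ) (hlam : 2 < lam) (hε0 : 0 < ε)
    (p q : Fin (d * b)) (hpq : p ≠ q)
    (hinner : |∑ k : Fin m, A k p * A k q| ≥ lam * ε * b) :
    ∃ u : Fin d → ℝ, (∑ i, (u i)^2 = 1) ∧
      (Nat.card {σ : Fin (d * b) → Bool //
          ¬ (∑ k : Fin m,
              ((A * Matrix.of (fun (j : Fin (d * b)) (i : Fin d) =>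
                  if (j : ℕ) / b = (i : ℕ)
                  then (if σ j then (1:ℝ) else -1) * Real.sqrt (1 / b)
                  else 0)).mulVec u k)^2
              ∈ Set.Icc ((1 - ε)^2) ((1 + ε)^2))} : ℝ)
        / 2^(d * b) ≥ 1/4 := by
  have hb : (0 : ℝ) < b := by exact_mod_cast Nat.pos_of_mul_pos_left p.pos
  set s : Finset (Fin d) := {p.divNat, q.divNat}
  set u : Fin d → ℝ := fun i => if i ∈ s then (√(#s : ℝ))⁻¹ else 0
  refine ⟨u, sum_sq_ite_mem_inv_sqrt_card s (insert_nonempty _ _), ?_⟩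
  have hw : ∀ j : Fin (d * b), j.divNat ∈ s → √(1 / b) * u j.divNat = √(1 / b) * (√(#s : ℝ))⁻¹ :=
    fun j hj => by simp [u, hj]
  have hwpq : √(1 / b) * u p.divNat * (√(1 / b) * u q.divNat) = 1 / (b * #s) := by
    rw [hw p (by simp [s]), hw q (by simp [s])]
    calc √(1 / b) * (√(#s : ℝ))⁻¹ * (√(1 / b) * (√(#s : ℝ))⁻¹)
        = √(1 / b) ^ 2 * (√(#s : ℝ) ^ 2)⁻¹ := by ring
      _ = 1 / (b * #s) := by
        rw [Real.sq_sqrt (by positivity), Real.sq_sqrt (by positivity)]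
        field_simp
  have hcorr : lam * ε / 2 ≤ 1 / (b * #s) * |∑ k, A k p * A k q| := by
    rw [div_mul_eq_mul_div, one_mul, le_div_iff₀ (by positivity)]
    have hs : (#s : ℝ) ≤ 2 := by exact_mod_cast card_le_two
    calc lam * ε / 2 * (b * #s) ≤ lam * ε / 2 * (b * 2) := by gcongr
      _ = lam * ε * b := by ring
      _ ≤ _ := hinner
  have hcount := pow_card_le_four_mul_card_signedSqNorm_notMem_Icc A
    (fun j => √(1 / b) * u j.divNat) hpq (l := (1 - ε) ^ 2) (h := (1 + ε) ^ 2) (by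
      change _ < 4 * |_ * ∑ k, A k p * A k q|
      rw [abs_mul, hwpq, abs_of_pos (by positivity)]
      nlinarith)
  simp only [sum_sq_mul_blockSign_mulVec, Nat.card_eq_fintype_card, Fintype.card_subtype]
  rw [Fintype.card_fin] at hcount
  rw [ge_iff_le, le_div_iff₀ (by positivity)]
  have := (Nat.cast_le (α := ℝ)).mpr hcount
  push_cast at this
  linarith

/-- Large column inner product implies anti-concentration (Li–Liu Lemma 4): if two
distinct columns of `A ∈ ℝ^{m×D}` with `D = d·b` (so `β = 1/b`) have inner product of
absolute value at least `λ ε/β = λ ε b`, then there is a unit vector `u ∈ ℝ^d` such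
that, over uniform Rademacher signs `σ` defining the block matrix `W` (with entry
`(j,i)` equal to `σ_j √β` when `j` lies in the `i`-th block of length `b`),
`‖AWu‖₂² ∉ [(1−ε)², (1+ε)²]` with probability at least `1/4`. -/
theorem stmt_19 (m d b : ℕ) (hd : 0 < d) (hb : 0 < b)
    (A : Matrix (Fin m) (Fin (d * b)) ℝ)
    (lam ε : ℝ) (hlam : 2 < lam) (hε0 : 0 < ε) (hε1 : ε < 1)
    (p q : Fin (d * b)) (hpq : p ≠ q)
    (hinner : |∑ k : Fin m, A k p * A k q| ≥ lam * ε * b) :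
    ∃ u : Fin d → ℝ, (∑ i, (u i)^2 = 1) ∧
      (Nat.card {σ : Fin (d * b) → Bool //
          ¬ (∑ k : Fin m,
              ((A * Matrix.of (fun (j : Fin (d * b)) (i : Fin d) =>
                  if (j : ℕ) / b = (i : ℕ)
                  then (if σ j then (1:ℝ) else -1) * Real.sqrt (1 / b)
                  else 0)).mulVec u k)^2
              ∈ Set.Icc ((1 - ε)^2) ((1 + ε)^2))} : ℝ)
        / 2^(d * b) ≥ 1/4 :=
  stmt_19_general m d b A lam ε hlam hε0 p q hpq hinner
end
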